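/- arXiv:1207.6175 — 5 statements merged into one kernel-verified Lean document; each statement's English description precedes it below -/
import Mathlib

section
/- Let H be a hereditary chip-firing model on a connected loopless multigraph G with sink v₀. If M ∈ H is ready in a configuration D and f : V → ℕ is any vector of firing counts with f(v₀) = 0, then the set M \ supp(f) (where supp(f) = {v : f(v) > 0}) is ready in the configuration D − Qf; more precisely, for every v ∈ M \ supp(f) one has (D − Qf − Qχ_{M \ supp(f)})(v) ≥ (D − Qχ_M)(v) ≥ 0. -/
open Finset

/-- The degree of a vertex in the multigraph encoded by the multiplicity
function `A : V → V → ℕ`. -/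
def mDeg {V : Type*} [Fintype V] (A : V → V → ℕ) (v : V) : ℕ := ∑ w, A v w

/-- The `(u,w)` entry of the Laplacian matrix of the multigraph encoded by `A`. -/
def mLap {V : Type*} [Fintype V] [DecidableEq V] (A : V → V → ℕ) (u w : V) : ℤ :=
  if u = w then (mDeg A u : ℤ) else -(A u w : ℤ)

/-- Fire according to an integer vector `f` of firing counts: `D - Q f`. -/
def fireVec {V : Type*} [Fintype V] [DecidableEq V] (A : V → V → ℕ) (D : V → ℤ)
    (f : V → ℤ) : V → ℤ :=
  fun v => D v - ∑ w, mLap A v w * f w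

/-- The characteristic 0/1 vector of a finite set of vertices. -/
def chi {V : Type*} [DecidableEq V] (S : Finset V) : V → ℤ := fun v => if v ∈ S then 1 else 0

/-- Fire the set `S`: `D - Q χ_S`. -/
def fireSet {V : Type*} [Fintype V] [DecidableEq V] (A : V → V → ℕ) (D : V → ℤ)
    (S : Finset V) : V → ℤ :=
  fireVec A D (chi S)

/-- The multigraph encoded by `A` is connected. -/
def mConnected {V : Type*} (A : V → V → ℕ) : Prop :=
  (SimpleGraph.fromRel (fun u w => 0 < A u w)).Connected

/-- `H` is a hereditary chip-firing model with sink `v0`: a collection of subsets of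
`V \ {v0}` that is downward closed and whose union is `V \ {v0}`. -/
def Hereditary {V : Type*} [DecidableEq V] (v0 : V) (H : Set (Finset V)) : Prop :=
  (∀ M ∈ H, v0 ∉ M) ∧ (∀ M ∈ H, ∀ B ⊆ M, B ∈ H) ∧ (∀ v, v ≠ v0 → ∃ M ∈ H, v ∈ M)

/-- The set `M` is ready in `D`: firing `M` sends no vertex of `M` into debt. -/
def Ready {V : Type*} [Fintype V] [DecidableEq V] (A : V → V → ℕ) (D : V → ℤ)
    (M : Finset V) : Prop :=
  ∀ v ∈ M, 0 ≤ fireSet A D M v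

/-- `D` is stable for the model `H`: no nonempty member of `H` is ready in `D`. -/
def Stable {V : Type*} [Fintype V] [DecidableEq V] (A : V → V → ℕ) (H : Set (Finset V))
    (D : V → ℤ) : Prop :=
  ∀ M ∈ H, M.Nonempty → ¬ Ready A D M

/-- A list of nonempty members of `H`, each ready in the configuration obtained from `D`
by firing the previous ones. -/
def ValidSeq {V : Type*} [Fintype V] [DecidableEq V] (A : V → V → ℕ) (H : Set (Finset V)) :
    (V → ℤ) → List (Finset V) → Prop
  | _, [] => True
  | D, M :: L => M ∈ H ∧ M.Nonempty ∧ Ready A D M ∧ ValidSeq A H (fireSet A D M) L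

/-- The configuration obtained from `D` by firing the sets of `L` in order. -/
def fireList {V : Type*} [Fintype V] [DecidableEq V] (A : V → V → ℕ) (D : V → ℤ)
    (L : List (Finset V)) : V → ℤ :=
  L.foldl (fireSet A) D

/-- `D` stabilizes to `E`: some finite sequence of firings of nonempty ready sets of `H`
takes `D` to the stable configuration `E`. -/
def StabilizesTo {V : Type*} [Fintype V] [DecidableEq V] (A : V → V → ℕ)
    (H : Set (Finset V)) (D E : V → ℤ) : Prop :=
  ∃ L : List (Finset V), ValidSeq A H D L ∧ fireList A D L = E ∧ Stable A H E

/-- `D + Σ_{v ≠ v0} c(v) (χ_v - χ_{v0})`: add `c v` chips at each `v ≠ v0`, removing them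
from the sink. -/
def addChips {V : Type*} [Fintype V] [DecidableEq V] (v0 : V) (D : V → ℤ) (c : V → ℕ) :
    V → ℤ :=
  fun v => if v = v0 then D v - ∑ w ∈ Finset.univ.erase v0, (c w : ℤ) else D v + c v

/-- `D` is reachable from `D'`: one can add chips to `D'` (taking them from the sink) and
then fire nonempty ready sets of `H` to reach `D`. -/
def Reachable {V : Type*} [Fintype V] [DecidableEq V] (A : V → V → ℕ) (H : Set (Finset V))
    (v0 : V) (D D' : V → ℤ) : Prop :=
  ∃ c : V → ℕ, c v0 = 0 ∧ ∃ L : List (Finset V),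
    ValidSeq A H (addChips v0 D' c) L ∧ fireList A (addChips v0 D' c) L = D

/-- `D` is recurrent: nonnegative off the sink, stable, and reachable from every
configuration nonnegative off the sink. -/
def Recurrent {V : Type*} [Fintype V] [DecidableEq V] (A : V → V → ℕ) (H : Set (Finset V))
    (v0 : V) (D : V → ℤ) : Prop :=
  (∀ v, v ≠ v0 → 0 ≤ D v) ∧ Stable A H D ∧
    ∀ D' : V → ℤ, (∀ v, v ≠ v0 → 0 ≤ D' v) → Reachable A H v0 D D'

/-! Firing `f` and then `S` is firing `f + χ_S`. Off the diagonal the Laplacian is `-A ≤ 0`, so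
at a vertex `v` whose own firing count is unchanged, firing the other vertices more often can only
add chips to `v`. And `f + χ_{M \ supp f}` dominates `χ_M` everywhere while agreeing with it at
each `v ∈ M \ supp f`. -/

section Firing

variable {V : Type*} [Fintype V] [DecidableEq V] (A : V → V → ℕ)

theorem fireVec_fireVec (D f g : V → ℤ) :
    fireVec A (fireVec A D f) g = fireVec A D (f + g) := by
  ext v
  simp only [fireVec, Pi.add_apply, mul_add, sum_add_distrib]
  ring

theorem fireSet_fireVec (D f : V → ℤ) (S : Finset V) :
    fireSet A (fireVec A D f) S = fireVec A D (f + chi S) :=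
  fireVec_fireVec A D f (chi S)

theorem fireVec_apply_le_of_le_off_diag (D : V → ℤ) {f g : V → ℤ} {v : V} (hv : f v = g v)
    (hle : ∀ w, w ≠ v → f w ≤ g w) : fireVec A D f v ≤ fireVec A D g v := by
  refine sub_le_sub_left (sum_le_sum fun w _ => ?_) _
  rcases eq_or_ne w v with rfl | hwv
  · rw [hv]
  · rw [mLap, if_neg hwv.symm]
    exact mul_le_mul_of_nonpos_left (hle w hwv) (neg_nonpos.2 (Int.natCast_nonneg _))

end Firing

theorem chi_le_add_chi_filter_eq_zero {V : Type*} [DecidableEq V] (M : Finset V) (f : V → ℕ)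
    (w : V) : chi M w ≤ f w + chi (M.filter fun w => f w = 0) w := by
  by_cases hfw : f w = 0
  · simp [chi, hfw]
  · have hpos : (1 : ℤ) ≤ f w := by exact_mod_cast Nat.one_le_iff_ne_zero.2 hfw
    simp only [chi, mem_filter, hfw, and_false, if_false]
    split_ifs <;> omega

theorem ready_after_firing_general {V : Type*} [Fintype V] [DecidableEq V] (A : V → V → ℕ)
    (v0 : V)
    (H : Set (Finset V)) (hH : Hereditary v0 H)
    (D : V → ℤ) (M : Finset V) (hM : M ∈ H) (hready : Ready A D M)
    (f : V → ℕ) :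
    M.filter (fun v => f v = 0) ∈ H ∧
      ∀ v ∈ M, f v = 0 →
        fireSet A D M v ≤
          fireSet A (fireVec A D (fun w => (f w : ℤ))) (M.filter (fun w => f w = 0)) v ∧
        0 ≤ fireSet A D M v := by
  refine ⟨hH.2.1 M hM _ (filter_subset _ _), fun v hv hfv => ⟨?_, hready v hv⟩⟩
  rw [fireSet_fireVec]
  refine fireVec_apply_le_of_le_off_diag A D ?_ fun w _ => chi_le_add_chi_filter_eq_zero M f w
  simp [chi, hv, hfv]

/-- If `M ∈ H` is ready in `D` and `f : V → ℕ` is a vector of firing counts vanishing at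
the sink, then `M \ supp f` is ready in `D - Q f`; more precisely, every
`v ∈ M \ supp f` has at least as many chips after firing `f` and then `M \ supp f`
as it does after firing `M` alone. -/
theorem ready_after_firing {V : Type*} [Fintype V] [DecidableEq V] (A : V → V → ℕ)
    (hsymm : ∀ u w, A u w = A w u) (hloop : ∀ v, A v v = 0) (hconn : mConnected A)
    (v0 : V)
    (H : Set (Finset V)) (hH : Hereditary v0 H)
    (D : V → ℤ) (M : Finset V) (hM : M ∈ H) (hready : Ready A D M)
    (f : V → ℕ) (hf : f v0 = 0) :
    M.filter (fun v => f v = 0) ∈ H ∧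
      ∀ v ∈ M, f v = 0 →
        fireSet A D M v ≤
          fireSet A (fireVec A D (fun w => (f w : ℤ))) (M.filter (fun w => f w = 0)) v ∧
        0 ≤ fireSet A D M v :=
  ready_after_firing_general A v0 H hH D M hM hready f
end

section
/- Let G be a connected loopless multigraph with sink v₀. Every configuration D of degree zero is equivalent (modulo the integral span of the columns of the Laplacian Q, via a vector of firing counts vanishing at v₀) to a configuration D' with D'(v) ≥ deg(v) for every vertex v ≠ v₀. -/
open Finset

section AuxChip

variable {V : Type*} [Fintype V] [DecidableEq V]

lemma lap_apply (A : V → V → ℕ) (hloop : ∀ v, A v v = 0) (g : V → ℤ) (v : V) :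
    ∑ w, mLap A v w * g w = (mDeg A v : ℤ) * g v - ∑ w, (A v w : ℤ) * g w := by
  have h : ∀ w, mLap A v w * g w
      = (if w = v then (mDeg A v : ℤ) * g w else 0) - (A v w : ℤ) * g w := by
    intro w
    by_cases hw : v = w
    · subst hw; simp [mLap, hloop]
    · simp only [mLap, if_neg hw, if_neg (Ne.symm hw)]
      ring
  simp only [h, Finset.sum_sub_distrib, Finset.sum_ite_eq' Finset.univ v,
    Finset.mem_univ, if_true]

lemma nonpos_of_harmonic (A : V → V → ℕ) (hsymm : ∀ u w, A u w = A w u)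
    (hloop : ∀ v, A v v = 0) (hconn : mConnected A) (v0 : V)
    (F : V → ℤ) (hF0 : F v0 = 0)
    (hQ : ∀ v, v ≠ v0 → ∑ w, mLap A v w * F w = 0) :
    ∀ v, F v ≤ 0 := by
  obtain ⟨vm, -, hvm⟩ := Finset.exists_max_image Finset.univ F ⟨v0, Finset.mem_univ v0⟩
  intro v
  by_contra hv
  push_neg at hv
  have hpos : 0 < F vm := lt_of_lt_of_le hv (hvm v (Finset.mem_univ v))
  have hprop : ∀ a, F a = F vm → ∀ b, 0 < A a b → F b = F vm := by
    intro a ha b hb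
    have hav0 : a ≠ v0 := by intro h; rw [h, hF0] at ha; omega
    have h0 := hQ a hav0
    rw [lap_apply A hloop] at h0
    by_contra hne
    have hblt : F b < F vm := lt_of_le_of_ne (hvm b (Finset.mem_univ b)) hne
    have hlt : ∑ w, (A a w : ℤ) * F w < ∑ w, (A a w : ℤ) * F vm := by
      apply Finset.sum_lt_sum
      · intro i _
        exact mul_le_mul_of_nonneg_left (hvm i (Finset.mem_univ i)) (by positivity)
      · refine ⟨b, Finset.mem_univ b, ?_⟩
        have hb' : (0:ℤ) < (A a b : ℤ) := by exact_mod_cast hb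
        exact mul_lt_mul_of_pos_left hblt hb'
    have hsum : ∑ w, (A a w : ℤ) * F vm = (mDeg A a : ℤ) * F vm := by
      rw [← Finset.sum_mul]
      congr 1
      simp [mDeg]
    rw [ha] at h0
    rw [hsum] at hlt
    omega
  obtain ⟨p⟩ := hconn.preconnected vm v0
  have key : ∀ a b (p : (SimpleGraph.fromRel fun u w => 0 < A u w).Walk a b),
      F a = F vm → F b = F vm := by
    intro a b p
    induction p with
    | nil => exact fun h => h
    | @cons x y z hadj q ih =>
      intro hx
      rw [SimpleGraph.fromRel_adj] at hadj
      have hxy : 0 < A x y := by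
        rcases hadj.2 with h | h
        · exact h
        · rw [hsymm]; exact h
      exact ih (hprop x hx y hxy)
  have := key vm v0 p rfl
  rw [hF0] at this
  omega

/-- Extend a vector on `{w // w ≠ v0}` to `V` by zero at `v0`. -/
noncomputable def extZero (v0 : V) (g : {w : V // w ≠ v0} → ℤ) : V → ℤ :=
  fun x => if hx : x = v0 then 0 else g ⟨x, hx⟩

lemma exists_positive_h (A : V → V → ℕ) (hsymm : ∀ u w, A u w = A w u)
    (hloop : ∀ v, A v v = 0) (hconn : mConnected A) (v0 : V) :
    ∃ h : V → ℤ, h v0 = 0 ∧ ∀ v, v ≠ v0 → 1 ≤ ∑ w, mLap A v w * h w := by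
  classical
  set M : Matrix {w : V // w ≠ v0} {w : V // w ≠ v0} ℤ :=
    Matrix.of (fun u w => mLap A u.1 w.1) with hM
  have bridge : ∀ (g : {w : V // w ≠ v0} → ℤ) (v : {w : V // w ≠ v0}),
      M.mulVec g v = ∑ w : V, mLap A v.1 w * extZero v0 g w := by
    intro g v
    have hsplit : ∑ w : V, mLap A v.1 w * extZero v0 g w
        = mLap A v.1 v0 * extZero v0 g v0
          + ∑ w ∈ Finset.univ.erase v0, mLap A v.1 w * extZero v0 g w :=
      (Finset.add_sum_erase _ _ (Finset.mem_univ v0)).symm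
    rw [hsplit]
    have h0 : extZero v0 g v0 = 0 := dif_pos rfl
    rw [h0, mul_zero, zero_add]
    rw [Finset.sum_subtype (p := fun x => x ≠ v0) (Finset.univ.erase v0)
      (fun x => by simp [Finset.mem_erase]) (fun w => mLap A v.1 w * extZero v0 g w)]
    simp only [Matrix.mulVec, dotProduct, hM, Matrix.of_apply]
    apply Finset.sum_congr rfl
    intro w _
    congr 1
    simp [extZero, w.2]
  have hdet : M.det ≠ 0 := by
    intro h0
    obtain ⟨g, hg0, hgz⟩ := Matrix.exists_mulVec_eq_zero_iff.mpr h0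
    have hF : ∀ v, v ≠ v0 → ∑ w, mLap A v w * extZero v0 g w = 0 := by
      intro v hv
      rw [← bridge g ⟨v, hv⟩, hgz]
      rfl
    have hF' : ∀ v, v ≠ v0 → ∑ w, mLap A v w * (-(extZero v0 g w)) = 0 := by
      intro v hv
      have : ∑ w, mLap A v w * (-(extZero v0 g w)) = -∑ w, mLap A v w * extZero v0 g w := by
        rw [← Finset.sum_neg_distrib]
        apply Finset.sum_congr rfl
        intro w _
        ring
      rw [this, hF v hv, neg_zero]
    have h1 := nonpos_of_harmonic A hsymm hloop hconn v0 (extZero v0 g) (dif_pos rfl) hF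
    have h2 := nonpos_of_harmonic A hsymm hloop hconn v0 (fun x => -(extZero v0 g x))
      (by simp [extZero]) hF'
    apply hg0
    funext w
    have e1 := h1 w.1
    have e2 := h2 w.1
    have : extZero v0 g w.1 = g w := by simp [extZero, w.2]
    rw [this] at e1
    simp only [this] at e2
    simp only [Pi.zero_apply]
    omega
  set d : ℤ := M.det with hd
  set g : {w : V // w ≠ v0} → ℤ := d • (M.adjugate.mulVec (fun _ => 1)) with hg
  have hMg : ∀ v, M.mulVec g v = d * d := by
    intro v
    have : M.mulVec g = d • ((M * M.adjugate).mulVec (fun _ => 1)) := by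
      rw [hg, Matrix.mulVec_smul, Matrix.mulVec_mulVec]
    rw [this, Matrix.mul_adjugate, ← hd, Matrix.smul_mulVec, Matrix.one_mulVec]
    simp [smul_smul]
  have hdd : (1:ℤ) ≤ d * d := by
    have : 0 < d * d := mul_self_pos.mpr hdet
    omega
  refine ⟨extZero v0 g, dif_pos rfl, ?_⟩
  intro v hv
  rw [← bridge g ⟨v, hv⟩, hMg]
  exact hdd

end AuxChip

/-- Every configuration of degree zero is chip-firing equivalent, via a vector of firing
counts vanishing at the sink, to a configuration having at least `deg v` chips at every
vertex `v ≠ v₀`. -/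
theorem exists_equivalent_large_config {V : Type*} [Fintype V] [DecidableEq V] (A : V → V → ℕ)
    (hsymm : ∀ u w, A u w = A w u) (hloop : ∀ v, A v v = 0) (hconn : mConnected A)
    (v0 : V)
    (D : V → ℤ) (hdeg : ∑ v, D v = 0) :
    ∃ f : V → ℤ, f v0 = 0 ∧ ∀ v, v ≠ v0 → (mDeg A v : ℤ) ≤ fireVec A D f v := by
  classical
  obtain ⟨h, hh0, hh1⟩ := exists_positive_h A hsymm hloop hconn v0
  set c : ℤ := ∑ v, (((mDeg A v : ℤ) - D v).toNat : ℤ) with hc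
  have hc0 : 0 ≤ c := Finset.sum_nonneg (fun v _ => Int.natCast_nonneg _)
  have hcv : ∀ v, (mDeg A v : ℤ) - D v ≤ c := by
    intro v
    calc (mDeg A v : ℤ) - D v ≤ (((mDeg A v : ℤ) - D v).toNat : ℤ) := Int.self_le_toNat _
      _ ≤ c := Finset.single_le_sum (fun i _ => Int.natCast_nonneg _) (Finset.mem_univ v)
  refine ⟨fun x => -c * h x, by simp [hh0], ?_⟩
  intro v hv
  have hQ := hh1 v hv
  show (mDeg A v : ℤ) ≤ D v - ∑ w, mLap A v w * (-c * h w)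
  have hlin : ∑ w, mLap A v w * (-c * h w) = -c * ∑ w, mLap A v w * h w := by
    rw [Finset.mul_sum]
    apply Finset.sum_congr rfl
    intro w _
    ring
  rw [hlin]
  have hmul : c ≤ c * ∑ w, mLap A v w * h w := le_mul_of_one_le_right hc0 hQ
  have := hcv v
  linarith
end

section
/- Let H be a hereditary chip-firing model on a connected loopless multigraph G with sink v₀. There exists a configuration ε with ε(v) > 0 for every v ≠ v₀ (namely ε = D − D° for any configuration D with D(v) ≥ deg(v) for all v ≠ v₀) such that for every recurrent configuration ν and every k ∈ ℕ, the stabilization of ν + kε equals ν. -/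
open Finset

set_option linter.unusedSectionVars false
namespace ChipAux

open Finset Relation

variable {V : Type*} [Fintype V] [DecidableEq V]

/-- Apply the Laplacian to an integer vector. -/
def Qi (A : V → V → ℕ) (x : V → ℤ) : V → ℤ := fun v => ∑ w, mLap A v w * x w

lemma fireSet_apply (A : V → V → ℕ) (D : V → ℤ) (S : Finset V) (v : V) :
    fireSet A D S v = D v - Qi A (chi S) v := rfl

lemma Qi_pt_add (A : V → V → ℕ) (x y : V → ℤ) (v : V) :
    Qi A (fun w => x w + y w) v = Qi A x v + Qi A y v := by
  simp [Qi, mul_add, Finset.sum_add_distrib]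

lemma Qi_zero (A : V → V → ℕ) (v : V) : Qi A (fun _ => (0 : ℤ)) v = 0 := by
  simp [Qi]

lemma chi_empty (v : V) : chi (∅ : Finset V) v = 0 := by simp [chi]

lemma Qi_chi_empty (A : V → V → ℕ) (v : V) : Qi A (chi (∅ : Finset V)) v = 0 := by
  simp [Qi, chi]

lemma chi_add_sdiff (M N : Finset V) (v : V) :
    chi M v + chi (N \ M) v = chi N v + chi (M \ N) v := by
  simp only [chi, Finset.mem_sdiff]
  by_cases hM : v ∈ M <;> by_cases hN : v ∈ N <;> simp [hM, hN]

lemma Qi_chi_nonpos (A : V → V → ℕ) (S : Finset V) (v : V) (hv : v ∉ S) :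
    Qi A (chi S) v ≤ 0 := by
  apply Finset.sum_nonpos
  intro w _
  by_cases hw : w ∈ S
  · have hvw : v ≠ w := fun h => hv (h ▸ hw)
    simp [chi, hw, mLap, hvw]
  · simp [chi, hw]

end ChipAux
namespace ChipAux
open Finset Relation
variable {V : Type*} [Fintype V] [DecidableEq V]

/-- One firing step of the model. -/
def Step (A : V → V → ℕ) (H : Set (Finset V)) (X Y : V → ℤ) : Prop :=
  ∃ M ∈ H, M.Nonempty ∧ Ready A X M ∧ Y = fireSet A X M

lemma fireSet_fireSet_eq (A : V → V → ℕ) (X : V → ℤ) {M S M' S' : Finset V}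
    (h : ∀ v, chi M v + chi S v = chi M' v + chi S' v) :
    fireSet A (fireSet A X M) S = fireSet A (fireSet A X M') S' := by
  funext v
  have h2 : Qi A (chi M) v + Qi A (chi S) v = Qi A (chi M') v + Qi A (chi S') v := by
    rw [← Qi_pt_add, ← Qi_pt_add]
    congr 1
    exact funext h
  simp only [fireSet_apply]
  omega

lemma ready_sdiff (A : V → V → ℕ) {X : V → ℤ} {N : Finset V} (hN : Ready A X N)
    (M : Finset V) : Ready A (fireSet A X M) (N \ M) := by
  intro v hv
  rw [Finset.mem_sdiff] at hv
  have h1 : 0 ≤ fireSet A X N v := hN v hv.1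
  have h2 : Qi A (chi M) v + Qi A (chi (N \ M)) v
      = Qi A (chi N) v + Qi A (chi (M \ N)) v := by
    rw [← Qi_pt_add, ← Qi_pt_add]
    congr 1
    exact funext (chi_add_sdiff M N)
  have h3 : Qi A (chi (M \ N)) v ≤ 0 :=
    Qi_chi_nonpos A _ v (by simp [Finset.mem_sdiff, hv.2])
  simp only [fireSet_apply] at h1 ⊢
  omega

lemma diamond {A : V → V → ℕ} {H : Set (Finset V)} {v0 : V} (hH : Hereditary v0 H) :
    ∀ X Y Z, Step A H X Y → Step A H X Z →
      ∃ W, ReflGen (Step A H) Y W ∧ ReflTransGen (Step A H) Z W := by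
  rintro X Y Z ⟨M, hM, hMne, hMr, rfl⟩ ⟨N, hN, hNne, hNr, rfl⟩
  refine ⟨fireSet A (fireSet A X M) (N \ M), ?_, ?_⟩
  · rcases Finset.eq_empty_or_nonempty (N \ M) with h | h
    · rw [h]
      have : fireSet A (fireSet A X M) (∅ : Finset V) = fireSet A X M := by
        funext v; simp [fireSet_apply, Qi_chi_empty]
      rw [this]
    · exact ReflGen.single ⟨N \ M, hH.2.1 N hN _ (Finset.sdiff_subset), h,
        ready_sdiff A hNr M, rfl⟩
  · have hswap : fireSet A (fireSet A X M) (N \ M) = fireSet A (fireSet A X N) (M \ N) :=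
      fireSet_fireSet_eq A X (chi_add_sdiff M N)
    rw [hswap]
    rcases Finset.eq_empty_or_nonempty (M \ N) with h | h
    · rw [h]
      have : fireSet A (fireSet A X N) (∅ : Finset V) = fireSet A X N := by
        funext v; simp [fireSet_apply, Qi_chi_empty]
      rw [this]
    · exact ReflTransGen.single ⟨M \ N, hH.2.1 M hM _ (Finset.sdiff_subset), h,
        ready_sdiff A hMr N, rfl⟩

lemma step_lift {A : V → V → ℕ} {H : Set (Finset V)} {v0 : V} (hH : Hereditary v0 H)
    {e : V → ℤ} (he : ∀ v, v ≠ v0 → 0 ≤ e v) {X Y : V → ℤ} (h : Step A H X Y) :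
    Step A H (fun v => X v + e v) (fun v => Y v + e v) := by
  obtain ⟨M, hM, hMne, hMr, rfl⟩ := h
  refine ⟨M, hM, hMne, ?_, ?_⟩
  · intro v hv
    have hv0 : v ≠ v0 := fun hc => hH.1 M hM (hc ▸ hv)
    have := hMr v hv
    simp only [fireSet_apply] at this ⊢
    have := he v hv0
    omega
  · funext v; simp only [fireSet_apply]; ring

lemma rtg_lift {A : V → V → ℕ} {H : Set (Finset V)} {v0 : V} (hH : Hereditary v0 H)
    {e : V → ℤ} (he : ∀ v, v ≠ v0 → 0 ≤ e v) {X Y : V → ℤ}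
    (h : ReflTransGen (Step A H) X Y) :
    ReflTransGen (Step A H) (fun v => X v + e v) (fun v => Y v + e v) :=
  h.lift (fun Z : V → ℤ => fun v => Z v + e v) (fun _ _ hab => step_lift hH he hab)

lemma stable_rtg_eq {A : V → V → ℕ} {H : Set (Finset V)} {ν W : V → ℤ}
    (hs : Stable A H ν) (h : ReflTransGen (Step A H) ν W) : W = ν := by
  rcases h.cases_head with h | ⟨c, hc, _⟩
  · exact h.symm
  · obtain ⟨M, hM, hMne, hMr, _⟩ := hc
    exact absurd hMr (hs M hM hMne)

lemma validSeq_to_rtg {A : V → V → ℕ} {H : Set (Finset V)} :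
    ∀ (L : List (Finset V)) (D : V → ℤ), ValidSeq A H D L →
      ReflTransGen (Step A H) D (fireList A D L)
  | [], D, _ => ReflTransGen.refl
  | M :: L, D, h => by
    obtain ⟨hM, hMne, hMr, hrest⟩ := h
    have : fireList A D (M :: L) = fireList A (fireSet A D M) L := rfl
    rw [this]
    exact ReflTransGen.head ⟨M, hM, hMne, hMr, rfl⟩ (validSeq_to_rtg L _ hrest)

lemma rtg_to_validSeq {A : V → V → ℕ} {H : Set (Finset V)} {D E : V → ℤ}
    (h : ReflTransGen (Step A H) D E) :
    ∃ L, ValidSeq A H D L ∧ fireList A D L = E := by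
  induction h using Relation.ReflTransGen.head_induction_on with
  | refl => exact ⟨[], trivial, rfl⟩
  | head hstep _ ih =>
    obtain ⟨M, hM, hMne, hMr, rfl⟩ := hstep
    obtain ⟨L, hL, hE⟩ := ih
    exact ⟨M :: L, ⟨hM, hMne, hMr, hL⟩, hE⟩

end ChipAux
namespace ChipAux
open Finset Relation
variable {V : Type*} [Fintype V] [DecidableEq V]

lemma Qi_eq_sum_sub (A : V → V → ℕ) (hloop : ∀ v, A v v = 0) (x : V → ℤ) (v : V) :
    Qi A x v = ∑ w, (A v w : ℤ) * (x v - x w) := by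
  have h1 : ∑ w, (A v w : ℤ) * (x v - x w)
      = (∑ w, (A v w : ℤ)) * x v - ∑ w, (A v w : ℤ) * x w := by
    rw [Finset.sum_mul, ← Finset.sum_sub_distrib]
    exact Finset.sum_congr rfl fun w _ => by ring
  rw [h1, Qi, ← Finset.sum_erase_add _ _ (Finset.mem_univ v)]
  have hvv : mLap A v v = (mDeg A v : ℤ) := if_pos rfl
  have herase : ∀ w ∈ Finset.univ.erase v, mLap A v w * x w = -((A v w : ℤ) * x w) := by
    intro w hw
    have hne : v ≠ w := Ne.symm (Finset.mem_erase.mp hw).1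
    simp [mLap, hne]
  rw [Finset.sum_congr rfl herase, hvv]
  have h3 : ∑ w ∈ Finset.univ.erase v, (A v w : ℤ) * x w = ∑ w, (A v w : ℤ) * x w :=
    Finset.sum_erase _ (by simp [hloop v])
  have h4 : (mDeg A v : ℤ) = ∑ w, (A v w : ℤ) := by simp [mDeg]
  rw [Finset.sum_neg_distrib, h3, h4]
  ring

lemma exists_good_f (A : V → V → ℕ) (hsymm : ∀ u w, A u w = A w u)
    (hloop : ∀ v, A v v = 0) (hconn : mConnected A) (v0 : V) :
    ∃ f : V → ℕ, f v0 = 0 ∧ ∀ v, v ≠ v0 → 0 < Qi A (fun w => (f w : ℤ)) v := by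
  classical
  set G := SimpleGraph.fromRel (fun u w => 0 < A u w) with hG
  have hc : G.Connected := hconn
  set C := Fintype.card V with hC
  set K : ℕ := 1 + ∑ u, ∑ w, A u w with hK
  set d : V → ℕ := fun v => G.dist v0 v with hd
  set F : ℕ → ℕ := fun i => ∑ j ∈ Finset.range i, K ^ (C - j) with hF
  have adjA : ∀ u w, G.Adj u w → 0 < A u w := by
    intro u w h
    rw [hG, SimpleGraph.fromRel_adj] at h
    rcases h.2 with h' | h'
    · exact h'
    · rw [hsymm]; exact h'
  have hd1 : ∀ u w, G.Adj u w → d w ≤ d u + 1 := by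
    intro u w h
    have ht := hc.dist_triangle (u := v0) (v := u) (w := w)
    have h2 : G.dist u w ≤ 1 := by
      have := SimpleGraph.dist_le h.toWalk
      simpa using this
    simp only [hd]
    omega
  have hdlt : ∀ v, d v < C := by
    intro v
    obtain ⟨p⟩ := hc v0 v
    have h1 : G.dist v0 v ≤ p.bypass.length := SimpleGraph.dist_le p.bypass
    have h2 : p.bypass.length < Fintype.card V := p.bypass_isPath.length_lt
    simp only [hd]
    omega
  have hFmono : Monotone F := by
    intro i j hij
    exact Finset.sum_le_sum_of_subset (Finset.range_subset_range.mpr hij)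
  refine ⟨fun v => F (d v), ?_, ?_⟩
  · show F (d v0) = 0
    have : d v0 = 0 := by simp only [hd]; exact SimpleGraph.dist_self
    rw [this]
    simp [hF]
  intro v hv
  set fZ : V → ℤ := fun w => ((F (d w) : ℕ) : ℤ) with hfZ
  have hQ : Qi A fZ v = ∑ w, (A v w : ℤ) * (fZ v - fZ w) := Qi_eq_sum_sub A hloop fZ v
  have hi1 : 1 ≤ d v := by
    have := hc.pos_dist_of_ne (Ne.symm hv)
    simp only [hd]
    omega
  have hiC : d v < C := hdlt v
  -- find a neighbor u at distance i - 1
  obtain ⟨p, hp⟩ := (hc v0 v).exists_walk_length_eq_dist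
  obtain ⟨u, hadj, q, hq⟩ := SimpleGraph.Walk.exists_eq_cons_of_ne hv p.reverse
  have hp2 : p.length = d v := hp
  have hlen : q.length + 1 = d v := by
    have h1 : p.reverse.length = p.length := SimpleGraph.Walk.length_reverse p
    rw [hq] at h1
    simp only [SimpleGraph.Walk.length_cons] at h1
    omega
  have hdu : d u + 1 = d v := by
    have h1 : d u ≤ q.length := by
      have := SimpleGraph.dist_le q.reverse
      simpa [SimpleGraph.Walk.length_reverse, hd] using this
    have h2 : d v ≤ d u + 1 := hd1 u v hadj.symm
    omega
  have hAvu : 0 < A v u := adjA v u hadj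
  set κ : ℤ := (K : ℤ) ^ (C - d v) with hκ
  have hKpos : 0 < (K : ℤ) := by positivity
  have hκpos : 0 < κ := pow_pos hKpos _
  -- bound for arbitrary w ≠ u
  have hbound : ∀ w ∈ Finset.univ.erase u, -((A v w : ℤ) * κ) ≤ (A v w : ℤ) * (fZ v - fZ w) := by
    intro w _
    rcases Nat.eq_zero_or_pos (A v w) with h0 | h0
    · simp [h0]
    · have hadjw : G.Adj v w := by
        rw [hG, SimpleGraph.fromRel_adj]
        exact ⟨fun he => by rw [he, hloop] at h0; exact absurd h0 (lt_irrefl 0), Or.inl h0⟩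
      have hdw : d w ≤ d v + 1 := hd1 v w hadjw
      have hFw : F (d w) ≤ F (d v) + K ^ (C - d v) := by
        have h1 : F (d w) ≤ F (d v + 1) := hFmono hdw
        have h2 : F (d v + 1) = F (d v) + K ^ (C - d v) := by
          simp only [hF]
          rw [Finset.sum_range_succ]
        omega
      have h3 : -κ ≤ fZ v - fZ w := by
        simp only [hfZ, hκ]
        have : ((F (d w) : ℤ)) ≤ (F (d v) : ℤ) + (K : ℤ) ^ (C - d v) := by exact_mod_cast hFw
        linarith
      have h4 : (0 : ℤ) ≤ (A v w : ℤ) := by positivity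
      calc -((A v w : ℤ) * κ) = (A v w : ℤ) * (-κ) := by ring
        _ ≤ (A v w : ℤ) * (fZ v - fZ w) := mul_le_mul_of_nonneg_left h3 h4
  -- the privileged neighbor term
  have huterm : (K : ℤ) * κ ≤ (A v u : ℤ) * (fZ v - fZ u) := by
    have hFi : F (d v) = F (d u) + K ^ (C - d u) := by
      have hh : d v = d u + 1 := hdu.symm
      rw [hh]
      simp only [hF]
      rw [Finset.sum_range_succ]
    have hexp : C - d u = (C - d v) + 1 := by omega
    have h5 : fZ v - fZ u = κ * (K : ℤ) := by
      simp only [hfZ, hκ]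
      rw [hFi, hexp, pow_succ]
      push_cast
      ring
    have h6 : (1 : ℤ) ≤ (A v u : ℤ) := by exact_mod_cast hAvu
    rw [h5]
    have h7 := mul_le_mul_of_nonneg_right h6 (le_of_lt (mul_pos hκpos hKpos))
    rw [one_mul] at h7
    linarith
  -- sum of non-u coefficients is at most K - 1
  have hsumA : ∑ w ∈ Finset.univ.erase u, (A v w : ℤ) ≤ (K : ℤ) - 1 := by
    have h1 : ∑ w ∈ Finset.univ.erase u, A v w ≤ ∑ w, A v w :=
      Finset.sum_le_sum_of_subset (Finset.erase_subset _ _)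
    have h2 : ∑ w, A v w ≤ ∑ u', ∑ w, A u' w :=
      Finset.single_le_sum (f := fun u' => ∑ w, A u' w) (fun _ _ => Nat.zero_le _)
        (Finset.mem_univ v)
    have h4 : ∑ w ∈ Finset.univ.erase u, A v w + 1 ≤ K := by omega
    have hcast : ((∑ w ∈ Finset.univ.erase u, A v w : ℕ) : ℤ) + 1 ≤ ((K : ℕ) : ℤ) := by
      exact_mod_cast h4
    push_cast at hcast ⊢
    linarith
  -- assemble
  rw [hQ, ← Finset.add_sum_erase _ _ (Finset.mem_univ u)]
  have hrest : -(((K : ℤ) - 1) * κ) ≤ ∑ w ∈ Finset.univ.erase u, (A v w : ℤ) * (fZ v - fZ w) := by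
    have h1 : ∑ w ∈ Finset.univ.erase u, -((A v w : ℤ) * κ)
        ≤ ∑ w ∈ Finset.univ.erase u, (A v w : ℤ) * (fZ v - fZ w) :=
      Finset.sum_le_sum hbound
    have h2 : ∑ w ∈ Finset.univ.erase u, -((A v w : ℤ) * κ)
        = -((∑ w ∈ Finset.univ.erase u, (A v w : ℤ)) * κ) := by
      rw [Finset.sum_neg_distrib, Finset.sum_mul]
    rw [h2] at h1
    have h3 : (∑ w ∈ Finset.univ.erase u, (A v w : ℤ)) * κ ≤ ((K : ℤ) - 1) * κ :=
      mul_le_mul_of_nonneg_right hsumA (le_of_lt hκpos)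
    linarith
  nlinarith [huterm, hrest, hκpos]

end ChipAux
namespace ChipAux
open Finset Relation
variable {V : Type*} [Fintype V] [DecidableEq V]

lemma singleton_mem {v0 : V} {H : Set (Finset V)} (hH : Hereditary v0 H) {v : V}
    (hv : v ≠ v0) : ({v} : Finset V) ∈ H := by
  obtain ⟨M, hM, hvM⟩ := hH.2.2 v hv
  exact hH.2.1 M hM {v} (Finset.singleton_subset_iff.mpr hvM)

lemma run_down (A : V → V → ℕ) {H : Set (Finset V)} {v0 : V} (hH : Hereditary v0 H)
    (σ : V → ℤ) (N : ℕ)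
    (hσ : ∀ v, v ≠ v0 → (∑ u, ∑ w, (A u w : ℤ)) * (N : ℤ) ≤ σ v) :
    ∀ (n : ℕ) (g : V → ℕ), (∑ v, g v = n) → n ≤ N → g v0 = 0 →
      ReflTransGen (Step A H) (fun v => σ v + Qi A (fun w => (g w : ℤ)) v) σ := by
  intro n
  induction n with
  | zero =>
    intro g hsum _ _
    have hz : ∀ w, g w = 0 := by
      intro w
      have := Finset.sum_eq_zero_iff.mp hsum w (Finset.mem_univ w)
      exact this
    have : (fun v => σ v + Qi A (fun w => ((g w : ℕ) : ℤ)) v) = σ := by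
      funext v
      simp [hz, Qi]
    rw [this]
  | succ n ih =>
    intro g hsum hle hg0
    -- find a vertex with a positive count
    have hex : ∃ v, 0 < g v := by
      by_contra hno
      push_neg at hno
      have : ∀ w ∈ Finset.univ, g w = 0 := fun w _ => Nat.le_zero.mp (hno w)
      rw [Finset.sum_eq_zero this] at hsum
      omega
    obtain ⟨v, hgv⟩ := hex
    have hv0 : v ≠ v0 := fun hc => by rw [hc, hg0] at hgv; omega
    set g' : V → ℕ := fun w => if w = v then g w - 1 else g w with hg'
    have hcast : (fun w => ((g w : ℕ) : ℤ)) = fun w => ((g' w : ℕ) : ℤ) + chi {v} w := by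
      funext w
      by_cases hw : w = v
      · subst hw
        simp only [hg', if_pos rfl, chi, Finset.mem_singleton, if_pos rfl]
        have : 1 ≤ g w := hgv
        push_cast [Nat.cast_sub this]
        ring
      · simp [hg', hw, chi]
    have hgN : ∀ w, (g' w : ℤ) ≤ (N : ℤ) := by
      intro w
      have h1 : g' w ≤ g w := by simp only [hg']; split <;> omega
      have h2 : g w ≤ ∑ x, g x := Finset.single_le_sum (fun _ _ => Nat.zero_le _)
        (Finset.mem_univ w)
      have : g' w ≤ N := by omega
      exact_mod_cast this
    have hQbound : ∀ u', u' ≠ v0 → -((∑ u, ∑ w, (A u w : ℤ)) * (N : ℤ))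
        ≤ Qi A (fun w => ((g' w : ℕ) : ℤ)) u' := by
      intro u' _
      have hterm : ∀ w ∈ Finset.univ,
          -((A u' w : ℤ) * (N : ℤ)) ≤ mLap A u' w * ((g' w : ℕ) : ℤ) := by
        intro w _
        by_cases hw : u' = w
        · have h1 : (0 : ℤ) ≤ mLap A u' w * ((g' w : ℕ) : ℤ) := by
            rw [mLap, if_pos hw]
            positivity
          have h2 : -((A u' w : ℤ) * (N : ℤ)) ≤ 0 := neg_nonpos.mpr (by positivity)
          linarith
        · rw [mLap, if_neg hw]
          have := hgN w
          have hA : (0 : ℤ) ≤ (A u' w : ℤ) := by positivity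
          nlinarith
      have h1 := Finset.sum_le_sum hterm
      have h2 : ∑ w, -((A u' w : ℤ) * (N : ℤ)) = -((∑ w, (A u' w : ℤ)) * (N : ℤ)) := by
        rw [Finset.sum_neg_distrib, Finset.sum_mul]
      rw [h2] at h1
      have h3 : ∑ w, (A u' w : ℤ) ≤ ∑ u, ∑ w, (A u w : ℤ) :=
        Finset.single_le_sum (f := fun u => ∑ w, (A u w : ℤ))
          (fun _ _ => by positivity) (Finset.mem_univ u')
      have h4 : (0 : ℤ) ≤ (N : ℤ) := by positivity
      have h5 : (∑ w, (A u' w : ℤ)) * (N : ℤ) ≤ (∑ u, ∑ w, (A u w : ℤ)) * (N : ℤ) :=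
        mul_le_mul_of_nonneg_right h3 h4
      calc -((∑ u, ∑ w, (A u w : ℤ)) * (N : ℤ)) ≤ -((∑ w, (A u' w : ℤ)) * (N : ℤ)) := by
            linarith
        _ ≤ Qi A (fun w => ((g' w : ℕ) : ℤ)) u' := h1
    -- the fired configuration
    have hfire : fireSet A (fun u' => σ u' + Qi A (fun w => ((g w : ℕ) : ℤ)) u') {v}
        = fun u' => σ u' + Qi A (fun w => ((g' w : ℕ) : ℤ)) u' := by
      funext u'
      rw [fireSet_apply]
      have : Qi A (fun w => ((g w : ℕ) : ℤ)) u'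
          = Qi A (fun w => ((g' w : ℕ) : ℤ)) u' + Qi A (chi {v}) u' := by
        rw [hcast, Qi_pt_add]
      rw [this]
      ring
    have hready : Ready A (fun u' => σ u' + Qi A (fun w => ((g w : ℕ) : ℤ)) u') {v} := by
      intro w hw
      rw [Finset.mem_singleton] at hw
      subst hw
      rw [hfire]
      show 0 ≤ σ w + Qi A (fun w' => ((g' w' : ℕ) : ℤ)) w
      have := hQbound w hv0
      have := hσ w hv0
      linarith
    have hstep : Step A H (fun u' => σ u' + Qi A (fun w => ((g w : ℕ) : ℤ)) u')
        (fun u' => σ u' + Qi A (fun w => ((g' w : ℕ) : ℤ)) u') := by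
      refine ⟨{v}, singleton_mem hH hv0, ⟨v, Finset.mem_singleton_self v⟩, hready, ?_⟩
      rw [hfire]
    have hsum' : ∑ w, g' w = n := by
      have h1 : g' v + 1 = g v := by simp only [hg', if_pos rfl]; omega
      have h2 : ∑ w ∈ Finset.univ.erase v, g' w = ∑ w ∈ Finset.univ.erase v, g w :=
        Finset.sum_congr rfl fun w hw => by
          simp only [hg', if_neg (Finset.mem_erase.mp hw).1]
      have h3 := Finset.add_sum_erase Finset.univ g (Finset.mem_univ v)
      have h4 := Finset.add_sum_erase Finset.univ g' (Finset.mem_univ v)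
      omega
    have hg'0 : g' v0 = 0 := by
      simp only [hg', if_neg (fun h : v0 = v => hv0 h.symm)]
      exact hg0
    exact ReflTransGen.head hstep (ih g' hsum' (by omega) hg'0)

end ChipAux
/-- There is a configuration `ε`, positive off the sink, such that adding any multiple of
`ε` to a recurrent configuration `ν` and stabilizing returns `ν`. -/
theorem exists_epsilon_recurrent_fixed {V : Type*} [Fintype V] [DecidableEq V] (A : V → V → ℕ)
    (hsymm : ∀ u w, A u w = A w u) (hloop : ∀ v, A v v = 0) (hconn : mConnected A)
    (v0 : V)
    (H : Set (Finset V)) (hH : Hereditary v0 H) :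
    ∃ ε : V → ℤ, (∀ v, v ≠ v0 → 0 < ε v) ∧
      ∀ ν : V → ℤ, Recurrent A H v0 ν → ∀ k : ℕ,
        StabilizesTo A H (fun v => ν v + (k : ℤ) * ε v) ν := by
  classical
  obtain ⟨f, hf0, hfpos⟩ := ChipAux.exists_good_f A hsymm hloop hconn v0
  refine ⟨ChipAux.Qi A (fun w => (f w : ℤ)), fun v hv => hfpos v hv, ?_⟩
  set ε : V → ℤ := ChipAux.Qi A (fun w => (f w : ℤ)) with hε
  rintro ν ⟨hν0, hνstab, hνreach⟩ k
  set g : V → ℕ := fun w => k * f w with hg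
  have hkε : ∀ v, (k : ℤ) * ε v = ChipAux.Qi A (fun w => ((g w : ℕ) : ℤ)) v := by
    intro v
    simp only [hε, ChipAux.Qi, hg]
    rw [Finset.mul_sum]
    refine Finset.sum_congr rfl fun w _ => by push_cast; ring
  set N : ℕ := ∑ v, g v with hN
  set S : ℤ := ∑ u, ∑ w, (A u w : ℤ) with hS
  set σ : V → ℤ := fun v => if v = v0 then 0 else S * (N : ℤ) with hσdef
  have hσ : ∀ v, v ≠ v0 → S * (N : ℤ) ≤ σ v := by
    intro v hv
    simp only [hσdef, if_neg hv]
    exact le_rfl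
  have hσnn : ∀ v, v ≠ v0 → 0 ≤ σ v := by
    intro v hv
    simp only [hσdef, if_neg hv, hS]
    positivity
  have run1 : Relation.ReflTransGen (ChipAux.Step A H)
      (fun v => σ v + ChipAux.Qi A (fun w => ((g w : ℕ) : ℤ)) v) σ :=
    ChipAux.run_down A hH σ N hσ N g rfl le_rfl (by simp [hg, hf0])
  obtain ⟨c, hc0, L, hLvalid, hLfire⟩ := hνreach σ hσnn
  set e : V → ℤ :=
    fun v => if v = v0 then -(∑ w ∈ Finset.univ.erase v0, (c w : ℤ)) else (c v : ℤ) with he_def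
  have haddc : addChips v0 σ c = fun v => σ v + e v := by
    funext v
    by_cases h : v = v0
    · simp only [addChips, he_def, if_pos h]
      ring
    · simp only [addChips, he_def, if_neg h]
  have he : ∀ v, v ≠ v0 → 0 ≤ e v := by
    intro v hv
    simp only [he_def, if_neg hv]
    positivity
  have run2 : Relation.ReflTransGen (ChipAux.Step A H) (fun v => σ v + e v) ν := by
    have h0 := ChipAux.validSeq_to_rtg L (addChips v0 σ c) hLvalid
    rw [hLfire, haddc] at h0
    exact h0
  have hkε_nonneg : ∀ v, v ≠ v0 → 0 ≤ (k : ℤ) * ε v := fun v hv =>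
    mul_nonneg (Int.natCast_nonneg k) (le_of_lt (hfpos v hv))
  have chainA : Relation.ReflTransGen (ChipAux.Step A H)
      (fun v => σ v + ChipAux.Qi A (fun w => ((g w : ℕ) : ℤ)) v + e v)
      (fun v => σ v + e v) := ChipAux.rtg_lift hH he run1
  have chainA' : Relation.ReflTransGen (ChipAux.Step A H)
      (fun v => σ v + ChipAux.Qi A (fun w => ((g w : ℕ) : ℤ)) v + e v) ν := chainA.trans run2
  have chainB0 : Relation.ReflTransGen (ChipAux.Step A H)
      (fun v => σ v + e v + (k : ℤ) * ε v)
      (fun v => ν v + (k : ℤ) * ε v) := ChipAux.rtg_lift hH hkε_nonneg run2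
  have heq : (fun v => σ v + e v + (k : ℤ) * ε v)
      = (fun v => σ v + ChipAux.Qi A (fun w => ((g w : ℕ) : ℤ)) v + e v) := by
    funext v
    rw [hkε v]
    ring
  rw [heq] at chainB0
  obtain ⟨dd, hd1, hd2⟩ := Relation.church_rosser (ChipAux.diamond hH) chainA' chainB0
  have hdd : dd = ν := ChipAux.stable_rtg_eq hνstab hd1
  rw [hdd] at hd2
  obtain ⟨L', hL'valid, hL'fire⟩ := ChipAux.rtg_to_validSeq hd2
  exact ⟨L', hL'valid, hL'fire, hνstab⟩
end

section
/- Let G be a connected loopless multigraph with sink v₀, |V \ {v₀}| = n, and let D be a configuration nonnegative off the sink. Then D is superstable (no nonempty set A ⊆ V \ {v₀} satisfies (D − Qχ_A)(v) ≥ 0 for all v ∈ A) if and only if there exists an enumeration u₁, u₂, …, uₙ of V \ {v₀} such that for every i, setting S_i = {u_i, u_{i+1}, …, uₙ}, one has (D − Qχ_{S_i})(u_i) < 0. (This is the correctness of Dhar's burning algorithm for the cluster firing model.) -/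
open Finset

section DharAux

variable {V : Type*} [Fintype V] [DecidableEq V]

lemma fireSet_eq_of_mem (A : V → V → ℕ) (hloop : ∀ v, A v v = 0) (D : V → ℤ)
    (S : Finset V) (v : V) (hv : v ∈ S) :
    fireSet A D S v = D v - (mDeg A v : ℤ) + ∑ w ∈ S, (A v w : ℤ) := by
  unfold fireSet fireVec chi
  have h1 : ∑ w, mLap A v w * (if w ∈ S then (1:ℤ) else 0) = ∑ w ∈ S, mLap A v w := by
    simp [mul_ite, Finset.sum_ite_mem]
  rw [h1, ← Finset.add_sum_erase _ _ hv]
  have h2 : ∑ w ∈ S.erase v, mLap A v w = ∑ w ∈ S.erase v, -(A v w : ℤ) :=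
    Finset.sum_congr rfl fun w hw => by simp [mLap, (Finset.ne_of_mem_erase hw).symm]
  have h3 : ∑ w ∈ S.erase v, -(A v w : ℤ) = ∑ w ∈ S, -(A v w : ℤ) :=
    Finset.sum_erase S (by simp [hloop v])
  rw [h2, h3, Finset.sum_neg_distrib, mLap]
  simp
  ring

lemma fireSet_mono (A : V → V → ℕ) (hloop : ∀ v, A v v = 0) (D : V → ℤ)
    {S T : Finset V} (hST : S ⊆ T) {v : V} (hv : v ∈ S) :
    fireSet A D S v ≤ fireSet A D T v := by
  rw [fireSet_eq_of_mem A hloop D S v hv, fireSet_eq_of_mem A hloop D T v (hST hv)]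
  have := Finset.sum_le_sum_of_subset_of_nonneg (f := fun w => (A v w : ℤ)) hST
    (fun w _ _ => by positivity)
  linarith

lemma burnAux (A : V → V → ℕ) (hloop : ∀ v, A v v = 0) (D : V → ℤ) :
    ∀ L : List V,
    (∀ i : Fin L.length, fireSet A D (L.drop i).toFinset (L.get i) < 0) →
    ∀ M : Finset V, M.Nonempty → M ⊆ L.toFinset → ¬ Ready A D M := by
  intro L
  induction L with
  | nil =>
    intro _ M hM hsub _
    obtain ⟨x, hx⟩ := hM
    simpa using hsub hx
  | cons u L' ih =>
    intro hb M hM hsub hready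
    by_cases hu : u ∈ M
    · have h0 := hb ⟨0, by simp⟩
      simp only [List.drop_zero, List.get] at h0
      have h1 := fireSet_mono A hloop D hsub hu
      have h2 := hready u hu
      omega
    · refine ih (fun i => ?_) M hM (fun v hv => ?_) hready
      · have := hb ⟨i + 1, by simpa using i.isLt⟩
        simpa using this
      · have := hsub hv
        simp only [List.toFinset_cons, Finset.mem_insert] at this
        rcases this with h | h
        · exact absurd (h ▸ hv) hu
        · exact h

lemma buildList (A : V → V → ℕ) (hloop : ∀ v, A v v = 0) (D : V → ℤ) (v0 : V)
    (hsup : ∀ M : Finset V, v0 ∉ M → M.Nonempty → ¬ Ready A D M) :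
    ∀ (n : ℕ) (S : Finset V), S.card = n → v0 ∉ S →
      ∃ L : List V, L.Nodup ∧ L.toFinset = S ∧
        ∀ i : Fin L.length, fireSet A D (L.drop i).toFinset (L.get i) < 0 := by
  intro n
  induction n with
  | zero =>
    intro S hS _
    refine ⟨[], by simp, ?_, fun i => absurd i.isLt (by simp)⟩
    simp [Finset.card_eq_zero.mp hS]
  | succ n ih =>
    intro S hS hv0
    have hne : S.Nonempty := Finset.card_pos.mp (by omega)
    obtain ⟨u, hu, hneg⟩ : ∃ u ∈ S, fireSet A D S u < 0 := by
      by_contra h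
      push_neg at h
      exact hsup S hv0 hne (fun v hv => h v hv)
    obtain ⟨L', hnd, htf, hcond⟩ := ih (S.erase u)
      (by rw [Finset.card_erase_of_mem hu, hS]; rfl)
      (fun h => hv0 (Finset.mem_of_mem_erase h))
    have hunot : u ∉ L' := by
      intro h
      have := List.mem_toFinset.mpr h
      rw [htf] at this
      exact (Finset.ne_of_mem_erase this) rfl
    refine ⟨u :: L', List.nodup_cons.mpr ⟨hunot, hnd⟩, ?_, ?_⟩
    · rw [List.toFinset_cons, htf, Finset.insert_erase hu]
    · rintro ⟨j, hj⟩
      cases j with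
      | zero =>
        have : (u :: L').toFinset = S := by
          rw [List.toFinset_cons, htf, Finset.insert_erase hu]
        simpa [this] using hneg
      | succ j =>
        have := hcond ⟨j, by simpa using hj⟩
        simpa using this

end DharAux

/-- Correctness of Dhar's burning algorithm for the cluster firing model: a configuration
`D` nonnegative off the sink is superstable if and only if there is an enumeration
`u₁, …, uₙ` of `V \ {v₀}` such that firing each suffix set `S_i = {u_i, …, u_n}` sends
`u_i` into debt. -/
theorem dhar_burning_correct {V : Type*} [Fintype V] [DecidableEq V] (A : V → V → ℕ)
    (hsymm : ∀ u w, A u w = A w u) (hloop : ∀ v, A v v = 0) (hconn : mConnected A)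
    (v0 : V)
    (D : V → ℤ) (hD : ∀ v, v ≠ v0 → 0 ≤ D v) :
    (∀ M : Finset V, v0 ∉ M → M.Nonempty → ¬ Ready A D M) ↔
      ∃ L : List V, L.Nodup ∧ (∀ v : V, v ∈ L ↔ v ≠ v0) ∧
        ∀ i : Fin L.length, fireSet A D (L.drop i).toFinset (L.get i) < 0 := by
  constructor
  · intro hsup
    obtain ⟨L, hnd, htf, hcond⟩ := buildList A hloop D v0 hsup
      (Finset.univ.erase v0).card (Finset.univ.erase v0) rfl (Finset.notMem_erase v0 _)
    refine ⟨L, hnd, fun v => ?_, hcond⟩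
    rw [← List.mem_toFinset, htf]
    simp
  · rintro ⟨L, hnd, hmem, hcond⟩ M hv0 hne hready
    exact burnAux A hloop D L hcond M hne
      (fun v hv => List.mem_toFinset.mpr ((hmem v).mpr (fun h => hv0 (h ▸ hv)))) hready
end

section
/- Let H be a hereditary chip-firing model on a connected loopless multigraph G with sink v₀, and let D be a configuration nonnegative off the sink. Then every sequence of firings of nonempty ready sets of H starting from D is finite; that is, one cannot continue firing ready sets indefinitely, so every configuration nonnegative off the sink admits a stabilization. -/
open Finset

/-!
Along a firing sequence the total number of chips never increases (it drops by the loop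
multiplicities of each fired set), vertices off the sink stay nonnegative because fired sets are
ready and all other vertices only gain chips, and the sink never fires, so it never loses chips.
Hence every vertex stays below `∑ D - min (D v₀) 0`. A vertex that has stopped firing gains a
chip whenever a neighbour fires, so the set of vertices firing infinitely often is closed under
adjacency. An infinite sequence makes this set nonempty, so by connectivity it contains the sink,
which never fires. If no stable configuration were reachable, ready sets could be fired forever.
-/

section

variable {V : Type*} [Fintype V] [DecidableEq V] {A : V → V → ℕ}

lemma fireSet_of_notMem {S : Finset V} {v : V} (hv : v ∉ S) (D : V → ℤ) :
    fireSet A D S v = D v + ∑ w ∈ S, (A v w : ℤ) := by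
  have hlap : ∀ w ∈ S, mLap A v w = -(A v w : ℤ) := fun w hw =>
    if_neg (ne_of_mem_of_not_mem hw hv).symm
  simp only [fireSet, fireVec, chi, mul_ite, mul_one, mul_zero, sum_ite_mem, univ_inter,
    sum_congr rfl hlap, sum_neg_distrib, sub_neg_eq_add]

lemma le_fireSet_of_notMem {S : Finset V} {v : V} (hv : v ∉ S) (D : V → ℤ) :
    D v ≤ fireSet A D S v := by
  rw [fireSet_of_notMem hv]
  exact le_add_of_nonneg_right (sum_nonneg fun _ _ => Int.natCast_nonneg _)

lemma sum_mLap_left (hsymm : ∀ u w, A u w = A w u) (w : V) : ∑ v, mLap A v w = A w w := by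
  have hlap : ∀ v, mLap A v w = (if v = w then (mDeg A w + A w w : ℤ) else 0) - A v w := by
    intro v
    by_cases hvw : v = w
    · subst hvw; simp [mLap]
    · simp [mLap, hvw]
  have hdeg : ∑ v, (A v w : ℤ) = mDeg A w := by
    simp only [mDeg, Nat.cast_sum, hsymm _ w]
  simp only [hlap, sum_sub_distrib, sum_ite_eq', mem_univ, if_true, hdeg]
  ring

lemma sum_fireVec (hsymm : ∀ u w, A u w = A w u) (D f : V → ℤ) :
    ∑ v, fireVec A D f v = ∑ v, D v - ∑ w, (A w w : ℤ) * f w := by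
  simp only [fireVec, sum_sub_distrib]
  rw [sum_comm]
  simp only [← sum_mul, sum_mLap_left hsymm]

lemma sum_fireSet_le (hsymm : ∀ u w, A u w = A w u) (D : V → ℤ) (S : Finset V) :
    ∑ v, fireSet A D S v ≤ ∑ v, D v := by
  rw [fireSet, sum_fireVec hsymm, sub_le_self_iff]
  exact sum_nonneg fun w _ => mul_nonneg (Int.natCast_nonneg _) (by unfold chi; split <;> simp)

lemma Ready.fireSet_nonneg {D : V → ℤ} {M : Finset V} (hM : Ready A D M) {v0 : V}
    (hD : ∀ v, v ≠ v0 → 0 ≤ D v) (v : V) (hv : v ≠ v0) : 0 ≤ fireSet A D M v := by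
  by_cases hvM : v ∈ M
  · exact hM v hvM
  · exact (hD v hv).trans (le_fireSet_of_notMem hvM D)

omit [DecidableEq V] in
/-- Only the sink can be in debt, so the positive parts of `E` add up to `∑ E - min (E v0) 0`. -/
lemma le_sum_sub_min_sink {E : V → ℤ} {v0 : V} (hE : ∀ v, v ≠ v0 → 0 ≤ E v)
    (v : V) : E v ≤ ∑ u, E u - min (E v0) 0 := by
  have hneg : ∑ u, min (E u) 0 = min (E v0) 0 :=
    sum_eq_single v0 (fun u _ hu => min_eq_right (hE u hu)) (by simp)
  calc E v ≤ max (E v) 0 := le_max_left _ _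
    _ ≤ ∑ u, max (E u) 0 := single_le_sum (f := fun u => max (E u) 0)
        (fun _ _ => le_max_right _ _) (mem_univ v)
    _ = ∑ u, (E u - min (E u) 0) := sum_congr rfl fun u _ => by linarith [min_add_max (E u) 0]
    _ = ∑ u, E u - min (E v0) 0 := by rw [sum_sub_distrib, hneg]

section FiringSequence

variable {c : ℕ → V → ℤ} {M : ℕ → Finset V} {v0 : V}

lemma firingSeq_nonneg (hc : ∀ k, c (k + 1) = fireSet A (c k) (M k))
    (hready : ∀ k, Ready A (c k) (M k)) (h0 : ∀ v, v ≠ v0 → 0 ≤ c 0 v) (k : ℕ) :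
    ∀ v, v ≠ v0 → 0 ≤ c k v := by
  induction k with
  | zero => exact h0
  | succ k ih => rw [hc]; exact (hready k).fireSet_nonneg ih

lemma firingSeq_le_sum_sub_min_sink (hsymm : ∀ u w, A u w = A w u)
    (hc : ∀ k, c (k + 1) = fireSet A (c k) (M k)) (hready : ∀ k, Ready A (c k) (M k))
    (hsink : ∀ k, v0 ∉ M k) (h0 : ∀ v, v ≠ v0 → 0 ≤ c 0 v) (k : ℕ) (v : V) : c k v ≤ ∑ u, c 0 u - min (c 0 v0) 0 := by
  have hsum : Antitone fun k => ∑ u, c k u :=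
    antitone_nat_of_succ_le fun k => by rw [hc]; exact sum_fireSet_le hsymm _ _
  have hsinkMono : Monotone fun k => c k v0 :=
    monotone_nat_of_le_succ fun k => by rw [hc]; exact le_fireSet_of_notMem (hsink k) _
  calc c k v ≤ ∑ u, c k u - min (c k v0) 0 :=
        le_sum_sub_min_sink (firingSeq_nonneg hc hready h0 k) v
    _ ≤ ∑ u, c 0 u - min (c 0 v0) 0 :=
        sub_le_sub (hsum (Nat.zero_le k)) (min_le_min_right 0 (hsinkMono (Nat.zero_le k)))

lemma firingSeq_monotone_of_notMem (hc : ∀ k, c (k + 1) = fireSet A (c k) (M k)) {v : V}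
    {K : ℕ} (hK : ∀ j, K ≤ j → v ∉ M j) : Monotone fun n => c (K + n) v :=
  monotone_nat_of_le_succ fun n => by
    rw [← add_assoc, hc]
    exact le_fireSet_of_notMem (hK _ (Nat.le_add_right K n)) _

/-- Once `v` has stopped firing, it gains a chip from each firing of its neighbour `w`. -/
lemma exists_add_le_firingSeq (hc : ∀ k, c (k + 1) = fireSet A (c k) (M k)) {v w : V}
    {K : ℕ} (hK : ∀ j, K ≤ j → v ∉ M j) (hA : 0 < A v w) (hw : {j | w ∈ M j}.Infinite)
    (n : ℕ) : ∃ m, c K v + n ≤ c (K + m) v := by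
  induction n with
  | zero => exact ⟨0, by simp⟩
  | succ n ih =>
    obtain ⟨m, hm⟩ := ih
    obtain ⟨j, hwj, hj⟩ := hw.exists_gt (K + m)
    obtain ⟨l, rfl⟩ := Nat.exists_eq_add_of_le hj.le
    have hmono : c (K + m) v ≤ c (K + m + l) v := by
      simpa only [add_assoc] using firingSeq_monotone_of_notMem hc hK (Nat.le_add_right m l)
    have hstep : c (K + m + l + 1) v = c (K + m + l) v + ∑ u ∈ M (K + m + l), (A v u : ℤ) := by
      rw [hc, fireSet_of_notMem (hK _ (by omega))]
    have hgain : (A v w : ℤ) ≤ ∑ u ∈ M (K + m + l), (A v u : ℤ) :=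
      single_le_sum (fun _ _ => Int.natCast_nonneg _) hwj
    refine ⟨m + l + 1, ?_⟩
    rw [← add_assoc, ← add_assoc, hstep]
    push_cast
    omega

lemma infinite_firing_of_adj (hsymm : ∀ u w, A u w = A w u)
    (hc : ∀ k, c (k + 1) = fireSet A (c k) (M k)) (hready : ∀ k, Ready A (c k) (M k))
    (hsink : ∀ k, v0 ∉ M k) (h0 : ∀ v, v ≠ v0 → 0 ≤ c 0 v) {v w : V} (hA : 0 < A v w)
    (hw : {j | w ∈ M j}.Infinite) : {j | v ∈ M j}.Infinite := by
  intro hv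
  obtain ⟨K, hK⟩ := hv.bddAbove
  have hstop : ∀ j, K + 1 ≤ j → v ∉ M j := fun j hj hvj => by
    have := hK (show j ∈ {j | v ∈ M j} from hvj); omega
  set B := ∑ u, c 0 u - min (c 0 v0) 0
  obtain ⟨m, hm⟩ := exists_add_le_firingSeq hc hstop hA hw (B + 1 - c (K + 1) v).toNat
  have := firingSeq_le_sum_sub_min_sink hsymm hc hready hsink h0 (K + 1 + m) v
  have := Int.self_le_toNat (B + 1 - c (K + 1) v)
  omega

omit [DecidableEq V] in
lemma exists_infinite_firing (hne : ∀ k, (M k).Nonempty) : ∃ v, {k | v ∈ M k}.Infinite := by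
  by_contra! hfin
  have hcover : (⋃ v, {k | v ∈ M k}) = Set.univ :=
    Set.eq_univ_of_forall fun k => Set.mem_iUnion.2 (hne k)
  exact Set.infinite_univ (hcover ▸ Set.finite_iUnion fun v => hfin v)

lemma exists_firing_eq_empty (hsymm : ∀ u w, A u w = A w u) (hconn : mConnected A)
    (hc : ∀ k, c (k + 1) = fireSet A (c k) (M k)) (hready : ∀ k, Ready A (c k) (M k))
    (hsink : ∀ k, v0 ∉ M k) (h0 : ∀ v, v ≠ v0 → 0 ≤ c 0 v) : ∃ k, M k = ∅ := by
  by_contra! hne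
  obtain ⟨v, hv⟩ := exists_infinite_firing hne
  have hsinkFin : ¬ {k | v0 ∈ M k}.Infinite := fun h =>
    let ⟨k, hk⟩ := h.nonempty; hsink k hk
  obtain ⟨p⟩ := hconn.preconnected v v0
  obtain ⟨d, -, hfst, hsnd⟩ := p.exists_boundary_dart {u | {k | u ∈ M k}.Infinite} hv hsinkFin
  obtain ⟨-, hA | hA⟩ := SimpleGraph.fromRel_adj _ _ _ |>.1 d.adj
  · exact hsnd (infinite_firing_of_adj hsymm hc hready hsink h0 (hsymm _ _ ▸ hA) hfst)
  · exact hsnd (infinite_firing_of_adj hsymm hc hready hsink h0 hA hfst)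

end FiringSequence

lemma fireList_ofFn_succ (D : V → ℤ) (M : ℕ → Finset V) (k : ℕ) :
    fireList A D (List.ofFn fun i : Fin (k + 1) => M i) =
      fireSet A (fireList A D (List.ofFn fun i : Fin k => M i)) (M k) := by
  simp only [fireList, List.ofFn_succ', List.concat_eq_append, List.foldl_append, List.foldl_cons,
    List.foldl_nil, Fin.val_castSucc, Fin.val_last]

variable {H : Set (Finset V)} {D : V → ℤ}

lemma ValidSeq.append_singleton {L : List (Finset V)} (hL : ValidSeq A H D L) {S : Finset V}
    (hSH : S ∈ H) (hS : S.Nonempty) (hready : Ready A (fireList A D L) S) :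
    ValidSeq A H D (L ++ [S]) := by
  induction L generalizing D with
  | nil => exact ⟨hSH, hS, hready, trivial⟩
  | cons M L ih => exact ⟨hL.1, hL.2.1, hL.2.2.1, ih hL.2.2.2 hready⟩

lemma exists_infinite_firing_of_not_stabilizes (h : ¬ ∃ E, StabilizesTo A H D E) :
    ∃ M : ℕ → Finset V, ∀ k : ℕ, M k ∈ H ∧ (M k).Nonempty ∧
      Ready A (fireList A D (List.ofFn fun i : Fin k => M i)) (M k) := by
  have hext : ∀ L, ∃ S, ValidSeq A H D L →
      S ∈ H ∧ S.Nonempty ∧ Ready A (fireList A D L) S := by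
    intro L
    by_contra! hL
    obtain ⟨hvalid, -⟩ := hL ∅
    exact h ⟨_, L, hvalid, rfl, fun S hSH hS hready => (hL S).2 hSH hS hready⟩
  choose next hnext using hext
  let P : ℕ → List (Finset V) := fun k => Nat.rec [] (fun _ L => L ++ [next L]) k
  have hvalid : ∀ k, ValidSeq A H D (P k) := by
    intro k
    induction k with
    | zero => trivial
    | succ k ih => exact ih.append_singleton (hnext _ ih).1 (hnext _ ih).2.1 (hnext _ ih).2.2
  have hP : ∀ k, (List.ofFn fun i : Fin k => next (P i)) = P k := by
    intro k
    induction k with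
    | zero => rfl
    | succ k ih =>
      simp only [List.ofFn_succ', List.concat_eq_append, Fin.val_castSucc, Fin.val_last, ih]
      rfl
  exact ⟨fun k => next (P k), fun k => by rw [hP]; exact hnext _ (hvalid k)⟩

lemma not_exists_infinite_firing (hsymm : ∀ u w, A u w = A w u) (hconn : mConnected A)
    {v0 : V} (hsink : ∀ M ∈ H, v0 ∉ M) (hD : ∀ v, v ≠ v0 → 0 ≤ D v) :
    ¬ ∃ M : ℕ → Finset V, ∀ k : ℕ, M k ∈ H ∧ (M k).Nonempty ∧
      Ready A (fireList A D (List.ofFn fun i : Fin k => M i)) (M k) := by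
  rintro ⟨M, hM⟩
  obtain ⟨k, hk⟩ := exists_firing_eq_empty hsymm hconn (fireList_ofFn_succ D M)
    (fun k => (hM k).2.2) (fun k => hsink _ (hM k).1) hD
  exact (hM k).2.1.ne_empty hk

end

theorem firing_terminates_general {V : Type*} [Fintype V] [DecidableEq V] (A : V → V → ℕ)
    (hsymm : ∀ u w, A u w = A w u) (hconn : mConnected A)
    (v0 : V)
    (H : Set (Finset V)) (hH : Hereditary v0 H)
    (D : V → ℤ) (hD : ∀ v, v ≠ v0 → 0 ≤ D v) :
    (¬ ∃ M : ℕ → Finset V, ∀ k : ℕ,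
        M k ∈ H ∧ (M k).Nonempty ∧
          Ready A (fireList A D (List.ofFn fun i : Fin k => M i)) (M k)) ∧
      ∃ E : V → ℤ, StabilizesTo A H D E := by
  have hfinite := not_exists_infinite_firing hsymm hconn hH.1 hD
  exact ⟨hfinite, not_not.1 fun h => hfinite (exists_infinite_firing_of_not_stabilizes h)⟩

/-- In a hereditary chip-firing model, every sequence of firings of nonempty ready sets
starting from a configuration nonnegative off the sink is finite (there is no infinite
such sequence), and hence every such configuration admits a stabilization. -/
theorem firing_terminates {V : Type*} [Fintype V] [DecidableEq V] (A : V → V → ℕ)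
    (hsymm : ∀ u w, A u w = A w u) (hloop : ∀ v, A v v = 0) (hconn : mConnected A)
    (v0 : V)
    (H : Set (Finset V)) (hH : Hereditary v0 H)
    (D : V → ℤ) (hD : ∀ v, v ≠ v0 → 0 ≤ D v) :
    (¬ ∃ M : ℕ → Finset V, ∀ k : ℕ,
        M k ∈ H ∧ (M k).Nonempty ∧
          Ready A (fireList A D (List.ofFn fun i : Fin k => M i)) (M k)) ∧
      ∃ E : V → ℤ, StabilizesTo A H D E :=
  firing_terminates_general A hsymm hconn v0 H hH D hD
end
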